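/- arXiv:2008.11722 — 5 statements merged into one kernel-verified Lean document; each statement's English description precedes it below -/
import Mathlib

section
/- Let h : [a,b] → ℝ be a bounded function, and suppose there exists a function H : [a,b] → ℝ differentiable on [a,b] with H'(x) = h(x) for all x ∈ [a,b]. Then the lower Riemann (Darboux) integral of h over [a,b] is at most H(b) - H(a), which in turn is at most the upper Riemann (Darboux) integral of h over [a,b]. -/
open Set

/-- `p` is a partition of `[a,b]` into `n` subintervals. -/
def IsPartition (a b : ℝ) (n : ℕ) (p : ℕ → ℝ) : Prop :=
  p 0 = a ∧ p n = b ∧ ∀ i < n, p i ≤ p (i + 1)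

/-- Lower Darboux sum of `h` with respect to the partition `p`. -/
noncomputable def lowerSum (h : ℝ → ℝ) (n : ℕ) (p : ℕ → ℝ) : ℝ :=
  ∑ i ∈ Finset.range n, sInf (h '' Set.Icc (p i) (p (i + 1))) * (p (i + 1) - p i)

/-- Upper Darboux sum of `h` with respect to the partition `p`. -/
noncomputable def upperSum (h : ℝ → ℝ) (n : ℕ) (p : ℕ → ℝ) : ℝ :=
  ∑ i ∈ Finset.range n, sSup (h '' Set.Icc (p i) (p (i + 1))) * (p (i + 1) - p i)

/-- Lower Darboux integral of `h` over `[a,b]`. -/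
noncomputable def lowerIntegral (h : ℝ → ℝ) (a b : ℝ) : ℝ :=
  sSup {s | ∃ n : ℕ, ∃ p : ℕ → ℝ, IsPartition a b n p ∧ s = lowerSum h n p}

/-- Upper Darboux integral of `h` over `[a,b]`. -/
noncomputable def upperIntegral (h : ℝ → ℝ) (a b : ℝ) : ℝ :=
  sInf {s | ∃ n : ℕ, ∃ p : ℕ → ℝ, IsPartition a b n p ∧ s = upperSum h n p}

lemma part_mono {n : ℕ} {p : ℕ → ℝ} (hp : ∀ i < n, p i ≤ p (i + 1)) :
    ∀ i j, i ≤ j → j ≤ n → p i ≤ p j := by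
  intro i j hij hjn
  induction j with
  | zero => simp_all
  | succ k ih =>
    rcases Nat.eq_or_lt_of_le hij with rfl | hlt
    · rfl
    · exact (ih (Nat.lt_succ_iff.mp hlt) (le_of_lt hjn)).trans
        (hp k (Nat.lt_of_succ_le hjn))

lemma key (a b : ℝ) (h H : ℝ → ℝ) (M : ℝ)
    (hM : ∀ x ∈ Set.Icc a b, |h x| ≤ M)
    (hH : ∀ x ∈ Set.Icc a b, HasDerivWithinAt H (h x) (Set.Icc a b) x)
    (n : ℕ) (p : ℕ → ℝ) (hp : IsPartition a b n p) :
    lowerSum h n p ≤ H b - H a ∧ H b - H a ≤ upperSum h n p := by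
  obtain ⟨h0, hn, hmono⟩ := hp
  have hsub : ∀ i < n, Set.Icc (p i) (p (i+1)) ⊆ Set.Icc a b := by
    intro i hi x hx
    exact ⟨h0 ▸ (part_mono hmono 0 i (Nat.zero_le _) hi.le).trans hx.1,
      hx.2.trans (hn ▸ part_mono hmono (i+1) n hi (le_refl n))⟩
  have main : ∀ i < n,
      sInf (h '' Set.Icc (p i) (p (i + 1))) * (p (i + 1) - p i) ≤ H (p (i+1)) - H (p i) ∧
      H (p (i+1)) - H (p i) ≤ sSup (h '' Set.Icc (p i) (p (i + 1))) * (p (i + 1) - p i) := by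
    intro i hi
    rcases eq_or_lt_of_le (hmono i hi) with heq | hlt
    · rw [← heq]; simp
    · have hcont : ContinuousOn H (Set.Icc (p i) (p (i+1))) :=
        fun x hx => ((hH x (hsub i hi hx)).continuousWithinAt).mono (hsub i hi)
      have hderiv : ∀ x ∈ Set.Ioo (p i) (p (i+1)), HasDerivAt H (h x) x := by
        intro x hx
        have hxab : x ∈ Set.Icc a b := hsub i hi ⟨hx.1.le, hx.2.le⟩
        have hax : a < x := lt_of_le_of_lt ((hsub i hi (Set.left_mem_Icc.mpr hlt.le)).1) hx.1
        have hxb : x < b := lt_of_lt_of_le hx.2 ((hsub i hi (Set.right_mem_Icc.mpr hlt.le)).2)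
        exact (hH x hxab).hasDerivAt (Icc_mem_nhds hax hxb)
      obtain ⟨c, hc, hceq⟩ := exists_hasDerivAt_eq_slope H h hlt hcont hderiv
      have hcmem : c ∈ Set.Icc (p i) (p (i+1)) := ⟨hc.1.le, hc.2.le⟩
      have hne : (h '' Set.Icc (p i) (p (i+1))).Nonempty := ⟨h c, Set.mem_image_of_mem _ hcmem⟩
      have hbdd : BddBelow (h '' Set.Icc (p i) (p (i+1))) := by
        refine ⟨-M, ?_⟩
        rintro y ⟨x, hx, rfl⟩
        exact neg_le_of_abs_le (hM x (hsub i hi hx))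
      have hbdd' : BddAbove (h '' Set.Icc (p i) (p (i+1))) := by
        refine ⟨M, ?_⟩
        rintro y ⟨x, hx, rfl⟩
        exact le_of_abs_le (hM x (hsub i hi hx))
      have h1 : sInf (h '' Set.Icc (p i) (p (i+1))) ≤ h c :=
        csInf_le hbdd (Set.mem_image_of_mem _ hcmem)
      have h2 : h c ≤ sSup (h '' Set.Icc (p i) (p (i+1))) :=
        le_csSup hbdd' (Set.mem_image_of_mem _ hcmem)
      have hHd : H (p (i+1)) - H (p i) = h c * (p (i+1) - p i) := by
        rw [hceq, div_mul_cancel₀]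
        linarith
      constructor
      · rw [hHd]; exact mul_le_mul_of_nonneg_right h1 (by linarith)
      · rw [hHd]; exact mul_le_mul_of_nonneg_right h2 (by linarith)
  have tele : ∑ i ∈ Finset.range n, (H (p (i+1)) - H (p i)) = H b - H a := by
    rw [Finset.sum_range_sub (fun i => H (p i)), hn, h0]
  constructor
  · rw [lowerSum, ← tele]
    exact Finset.sum_le_sum fun i hi => (main i (Finset.mem_range.mp hi)).1
  · rw [upperSum, ← tele]
    exact Finset.sum_le_sum fun i hi => (main i (Finset.mem_range.mp hi)).2

/-- **Volterra's theorem.** If `h` is bounded on `[a,b]` and has an antiderivative `H`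
on `[a,b]`, then the lower Darboux integral of `h` is at most `H b - H a`, which is at
most the upper Darboux integral of `h`. -/
theorem stmt_0 (a b : ℝ) (hab : a < b) (h H : ℝ → ℝ)
    (hbd : ∃ M : ℝ, ∀ x ∈ Set.Icc a b, |h x| ≤ M)
    (hH : ∀ x ∈ Set.Icc a b, HasDerivWithinAt H (h x) (Set.Icc a b) x) :
    lowerIntegral h a b ≤ H b - H a ∧ H b - H a ≤ upperIntegral h a b := by
  obtain ⟨M, hM⟩ := hbd
  have trivPart : IsPartition a b 1 (fun i => if i = 0 then a else b) := by
    refine ⟨rfl, rfl, ?_⟩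
    intro i hi
    interval_cases i
    simpa using hab.le
  constructor
  · apply csSup_le
    · exact ⟨_, 1, _, trivPart, rfl⟩
    · rintro s ⟨n, p, hp, rfl⟩
      exact (key a b h H M hM hH n p hp).1
  · apply le_csInf
    · exact ⟨_, 1, _, trivPart, rfl⟩
    · rintro s ⟨n, p, hp, rfl⟩
      exact (key a b h H M hM hH n p hp).2
end

section
/- Let f : [0,1] → ℝ be differentiable with f(0) = 0, such that for every natural number n > 1 there exists δ_n > 0 with |f(x)| < x^n for all x ∈ (0, δ_n), and such that there exists C > 0 with |x·f'(x)| ≤ C·|f(x)| for all x ∈ [0,1]. Then f(x) = 0 for every x ∈ [0,1]. -/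
open Set

/-- **Main theorem.** A differentiable function on `[0,1]`, flat at `0` in the sense
that `f 0 = 0` and `|f x| < x ^ n` near `0` for every `n > 1`, which satisfies
`|x * f' x| ≤ C * |f x|` on `[0,1]`, vanishes identically on `[0,1]`. -/
theorem stmt_2 (f f' : ℝ → ℝ)
    (hdiff : ∀ x ∈ Set.Icc (0 : ℝ) 1, HasDerivWithinAt f (f' x) (Set.Icc (0 : ℝ) 1) x)
    (h0 : f 0 = 0)
    (hflat : ∀ n : ℕ, 1 < n → ∃ δ > 0, ∀ x ∈ Set.Ioo 0 δ ∩ Set.Icc (0 : ℝ) 1, |f x| < x ^ n)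
    (hC : ∃ C > 0, ∀ x ∈ Set.Icc (0 : ℝ) 1, |x * f' x| ≤ C * |f x|) :
    ∀ x ∈ Set.Icc (0 : ℝ) 1, f x = 0 := by
  obtain ⟨C, hCpos, hCle⟩ := hC
  intro x₀ hx₀
  rcases eq_or_lt_of_le hx₀.1 with h | hx₀pos
  · rw [← h, h0]
  by_contra hfx₀
  set m : ℕ := ⌈C⌉₊ + 1 with hm
  have hmC : C ≤ (m : ℝ) := by
    have := Nat.le_ceil C
    push_cast [hm]; linarith
  have hfcont : ContinuousOn f (Icc (0:ℝ) 1) := fun x hx => (hdiff x hx).continuousWithinAt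
  set φ : ℝ → ℝ := fun x => f x ^ 2 / x ^ (2*m) with hφ
  have hφx₀ : 0 < φ x₀ := by
    have : 0 < f x₀ ^ 2 := by positivity
    exact div_pos this (by positivity)
  -- monotonicity of φ
  have key : ∀ ε ∈ Ioc (0:ℝ) x₀, φ x₀ ≤ φ ε := by
    intro ε hε
    have hε0 : (0:ℝ) < ε := hε.1
    have hanti : AntitoneOn φ (Icc ε x₀) := by
      have hsub : Icc ε x₀ ⊆ Icc (0:ℝ) 1 :=
        Icc_subset_Icc (le_of_lt hε0) hx₀.2
      apply antitoneOn_of_deriv_nonpos (convex_Icc _ _)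
      · apply ContinuousOn.div
        · exact ((hfcont.mono hsub).pow 2)
        · exact (continuousOn_pow _)
        · intro x hx
          have : 0 < x := lt_of_lt_of_le hε0 hx.1
          positivity
      · intro x hx
        rw [interior_Icc] at hx
        have hx0 : 0 < x := lt_trans hε0 hx.1
        have hx1 : x < 1 := lt_of_lt_of_le hx.2 hx₀.2
        have hmem : x ∈ Icc (0:ℝ) 1 := ⟨le_of_lt hx0, le_of_lt hx1⟩
        have hfd : HasDerivAt f (f' x) x :=
          (hdiff x hmem).hasDerivAt (Icc_mem_nhds hx0 hx1)
        have hxne : x ^ (2*m) ≠ 0 := by positivity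
        exact (((hfd.pow 2).div (hasDerivAt_pow (2*m) x) hxne)).differentiableAt.differentiableWithinAt
      · intro x hx
        rw [interior_Icc] at hx
        have hx0 : 0 < x := lt_trans hε0 hx.1
        have hx1 : x < 1 := lt_of_lt_of_le hx.2 hx₀.2
        have hmem : x ∈ Icc (0:ℝ) 1 := ⟨le_of_lt hx0, le_of_lt hx1⟩
        have hfd : HasDerivAt f (f' x) x :=
          (hdiff x hmem).hasDerivAt (Icc_mem_nhds hx0 hx1)
        have hxne : x ^ (2*m) ≠ 0 := by positivity
        have hD : HasDerivAt φ
            ((((2:ℕ) * f x ^ (2-1) * f' x) * x ^ (2*m)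
              - f x ^ 2 * ((2*m : ℕ) * x ^ (2*m - 1))) / (x ^ (2*m)) ^ 2) x :=
          (hfd.pow 2).div (hasDerivAt_pow (2*m) x) hxne
        rw [hD.deriv]
        apply div_nonpos_of_nonpos_of_nonneg _ (by positivity)
        -- numerator ≤ 0
        have hkey : f x * (x * f' x) ≤ (m : ℝ) * f x ^ 2 := by
          calc f x * (x * f' x) ≤ |f x * (x * f' x)| := le_abs_self _
            _ = |f x| * |x * f' x| := abs_mul _ _
            _ ≤ |f x| * (C * |f x|) := by
                exact mul_le_mul_of_nonneg_left (hCle x hmem) (abs_nonneg _)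
            _ = C * f x ^ 2 := by rw [← sq_abs (f x)]; ring
            _ ≤ (m : ℝ) * f x ^ 2 := by nlinarith [sq_nonneg (f x)]
        obtain ⟨k, hk⟩ : ∃ k, 2*m = k + 1 := ⟨2*m - 1, by omega⟩
        have hxk : (0:ℝ) < x ^ k := by positivity
        have h2m1 : 2*m - 1 = k := by omega
        rw [hk]
        simp only [add_tsub_cancel_right, pow_succ]
        push_cast
        have hkm : (k:ℝ) + 1 = 2 * m := by exact_mod_cast hk.symm
        have hmul := mul_le_mul_of_nonneg_left hkey (le_of_lt hxk)
        rw [hkm]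
        have heq : 2 * (f x ^ 0 * f x) * f' x * (x ^ k * x)
            - f x ^ 0 * f x * f x * (2 * (m:ℝ) * x ^ k)
            = 2 * (x ^ k * (f x * (x * f' x)) - x ^ k * ((m:ℝ) * f x ^ 2)) := by ring
        rw [heq]
        linarith [hmul]
    exact hanti (left_mem_Icc.mpr hε.2) (right_mem_Icc.mpr hε.2) hε.2
  -- flatness: pick n = m + 2
  obtain ⟨δ, hδpos, hδ⟩ := hflat (m + 2) (by omega)
  set ε : ℝ := min (δ/2) (min x₀ (min 1 (φ x₀))) with hεdef
  have hεpos : 0 < ε := by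
    apply lt_min (by linarith)
    exact lt_min hx₀pos (lt_min one_pos hφx₀)
  have hεδ : ε < δ := lt_of_le_of_lt (min_le_left _ _) (by linarith)
  have hεx₀ : ε ≤ x₀ := le_trans (min_le_right _ _) (min_le_left _ _)
  have hε1 : ε ≤ 1 := le_trans (min_le_right _ _) (le_trans (min_le_right _ _) (min_le_left _ _))
  have hεφ : ε ≤ φ x₀ := le_trans (min_le_right _ _) (le_trans (min_le_right _ _) (min_le_right _ _))
  have hεmem : ε ∈ Ioo 0 δ ∩ Icc (0:ℝ) 1 := ⟨⟨hεpos, hεδ⟩, le_of_lt hεpos, hε1⟩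
  have hflatε : |f ε| < ε ^ (m + 2) := hδ ε hεmem
  have hsq : f ε ^ 2 < ε ^ (2*(m+2)) := by
    have h1 : f ε ^ 2 = |f ε| ^ 2 := (sq_abs _).symm
    have h2 : ε ^ (2*(m+2)) = (ε ^ (m+2)) ^ 2 := by rw [← pow_mul]; ring_nf
    rw [h1, h2]
    exact pow_lt_pow_left₀ hflatε (abs_nonneg _) two_ne_zero
  have hφε : φ ε < ε ^ 4 := by
    rw [hφ]
    rw [div_lt_iff₀ (by positivity)]
    calc f ε ^ 2 < ε ^ (2*(m+2)) := hsq
      _ = ε ^ 4 * ε ^ (2*m) := by rw [← pow_add]; ring_nf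
  have h1 : φ x₀ ≤ φ ε := key ε ⟨hεpos, hεx₀⟩
  have h2 : ε ^ 4 ≤ ε := by
    have h3 : ε ^ 3 ≤ 1 := pow_le_one₀ hεpos.le hε1
    calc ε ^ 4 = ε * ε ^ 3 := by ring
      _ ≤ ε * 1 := by nlinarith
      _ = ε := mul_one ε
  linarith
end

section
/- Let f : [0,1] → ℝ be differentiable with f(0) = 0, satisfying |x·f'(x)| ≤ C·|f(x)| on [0,1] for some C > 0, and suppose for every n > 1 there exists δ_n > 0 with |f(x)| < x^n on (0, δ_n). Then for every natural number n > C, the inequality |f(x)| < x^n holds for all x ∈ (0,1]. -/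
open Set

private lemma key_step (f f' : ℝ → ℝ) (C : ℝ) (hCpos : 0 < C)
    (hdiff : ∀ x ∈ Set.Icc (0 : ℝ) 1, HasDerivWithinAt f (f' x) (Set.Icc (0 : ℝ) 1) x)
    (h0 : f 0 = 0)
    (hC : ∀ x ∈ Set.Icc (0 : ℝ) 1, |x * f' x| ≤ C * |f x|)
    (hflat : ∀ n : ℕ, 1 < n → ∃ δ > 0, ∀ x ∈ Set.Ioo 0 δ ∩ Set.Icc (0 : ℝ) 1, |f x| < x ^ n)
    (n : ℕ) (hn2 : 2 ≤ n) (hCn : C < n) :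
    ∀ x ∈ Set.Ioc (0 : ℝ) 1, |f x| < x ^ n := by
  have hn1 : 1 < n := hn2
  have hnpos : (0:ℝ) < n := by positivity
  have hcont : ContinuousOn f (Icc (0:ℝ) 1) :=
    fun x hx => (hdiff x hx).continuousWithinAt
  rintro x₀ ⟨hx₀0, hx₀1⟩
  by_contra hcon
  push_neg at hcon
  obtain ⟨δ, hδpos, hδ⟩ := hflat n hn1
  by_cases hx₀δ : x₀ < δ
  · exact absurd (hδ x₀ ⟨⟨hx₀0, hx₀δ⟩, ⟨hx₀0.le, hx₀1⟩⟩) (not_lt.2 hcon)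
  push_neg at hx₀δ
  -- the set of bad points
  set E : Set ℝ := Icc (δ/2) x₀ ∩ {x | x ^ n ≤ |f x|} with hE
  have hEsub : E ⊆ Icc (0:ℝ) 1 := fun x hx =>
    ⟨le_trans (by linarith) hx.1.1, le_trans hx.1.2 hx₀1⟩
  have hEclosed : IsClosed E := by
    have h1 : ContinuousOn (fun x => |f x| - x ^ n) (Icc (δ/2) x₀) := by
      apply ContinuousOn.sub
      · exact (hcont.mono (fun x hx => ⟨by linarith [hx.1], le_trans hx.2 hx₀1⟩)).abs
      · exact (continuous_pow n).continuousOn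
    have : E = Icc (δ/2) x₀ ∩ (fun x => |f x| - x ^ n) ⁻¹' (Ici 0) := by
      ext x; simp [hE, sub_nonneg]
    rw [this]
    exact h1.preimage_isClosed_of_isClosed isClosed_Icc isClosed_Ici
  have hEne : E.Nonempty := ⟨x₀, ⟨⟨by linarith, le_refl _⟩, hcon⟩⟩
  have hEbdd : BddBelow E := ⟨δ/2, fun x hx => hx.1.1⟩
  set b := sInf E with hb
  have hbE : b ∈ E := hEclosed.csInf_mem hEne hEbdd
  have hbmin : ∀ y ∈ E, b ≤ y := fun y hy => csInf_le hEbdd hy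
  have hbpos : 0 < b := lt_of_lt_of_le (by linarith) hbE.1.1
  have hb1 : b ≤ 1 := le_trans hbE.1.2 hx₀1
  have hbf : b ^ n ≤ |f b| := hbE.2
  -- below b, strict inequality
  have hsmall : ∀ x : ℝ, 0 < x → x < b → |f x| < x ^ n := by
    intro x hx hxb
    have hx1 : x ≤ 1 := le_trans (le_of_lt (lt_of_lt_of_le hxb hb1)) le_rfl
    by_cases hxδ : x < δ
    · exact hδ x ⟨⟨hx, hxδ⟩, ⟨hx.le, hx1⟩⟩
    · push_neg at hxδ
      by_contra hcc
      push_neg at hcc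
      have : x ∈ E := ⟨⟨by linarith, le_trans hxb.le hbE.1.2⟩, hcc⟩
      exact absurd (hbmin x this) (not_le.2 hxb)
  -- choose a = t * b
  set t : ℝ := (1 - C / n) / 2 with ht
  have hCn' : C / n < 1 := (div_lt_one hnpos).2 hCn
  have htpos : 0 < t := by simp only [ht]; linarith
  have ht1 : t < 1 := by simp only [ht]; linarith [div_pos hCpos hnpos]
  set a := t * b with ha
  have hapos : 0 < a := mul_pos htpos hbpos
  have hab : a < b := by
    have := mul_lt_mul_of_pos_right ht1 hbpos
    simpa [ha] using this
  have han : a ^ n ≤ t * b ^ n := by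
    have htn : t ^ n ≤ t := by
      calc t ^ n ≤ t ^ 1 := pow_le_pow_of_le_one htpos.le ht1.le (by omega)
      _ = t := pow_one t
    calc a ^ n = t ^ n * b ^ n := by rw [ha, mul_pow]
    _ ≤ t * b ^ n := by
        apply mul_le_mul_of_nonneg_right htn (by positivity)
  -- boundary function
  set B : ℝ → ℝ := fun x => C / n * x ^ n + (1 - C / n) * a ^ n with hB
  set B' : ℝ → ℝ := fun x => C * x ^ (n - 1) with hB'
  have hBderiv : ∀ x : ℝ, HasDerivAt B (B' x) x := by
    intro x
    have h1 : HasDerivAt (fun x : ℝ => C / n * x ^ n + (1 - C / n) * a ^ n)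
        (C / n * (n * x ^ (n - 1))) x :=
      (((hasDerivAt_pow n x)).const_mul (C / n)).add_const _
    convert h1 using 1
    field_simp [hB']
    ring
  have hmain : |f b| ≤ B b := by
    have := image_norm_le_of_norm_deriv_right_le_deriv_boundary (a := a) (b := b)
      (f := f) (f' := f') (B := B) (B' := B')
      (hcont.mono (fun x hx => ⟨le_trans hapos.le hx.1, le_trans hx.2 hb1⟩))
      (fun x hx => by
        have hx01 : x ∈ Icc (0:ℝ) 1 := ⟨le_trans hapos.le hx.1, le_trans hx.2.le hb1⟩
        exact (hdiff x hx01).mono_of_mem_nhdsWithin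
          (Icc_mem_nhdsGE_of_mem ⟨hx01.1, lt_of_lt_of_le hx.2 hb1⟩))
      (by
        have hfa : |f a| < a ^ n := hsmall a hapos hab
        have hBa : B a = a ^ n := by simp only [hB]; ring
        rw [Real.norm_eq_abs, hBa]; exact hfa.le)
      hBderiv
      (fun x hx => by
        have hxpos : 0 < x := lt_of_lt_of_le hapos hx.1
        have hx01 : x ∈ Icc (0:ℝ) 1 := ⟨hxpos.le, le_trans hx.2.le hb1⟩
        have h1 : |x * f' x| ≤ C * |f x| := hC x hx01
        have h2 : |f x| < x ^ n := hsmall x hxpos hx.2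
        have h3 : |x * f' x| ≤ C * x ^ n :=
          h1.trans (mul_le_mul_of_nonneg_left h2.le hCpos.le)
        rw [Real.norm_eq_abs]
        rw [abs_mul, abs_of_pos hxpos] at h3
        rw [show B' x = C * x ^ n / x by
          simp only [hB']
          rw [eq_div_iff hxpos.ne']
          rw [mul_assoc, ← pow_succ]
          congr 2
          omega]
        rw [le_div_iff₀ hxpos, mul_comm]
        exact h3)
      (right_mem_Icc.2 hab.le)
    simpa using this
  -- contradiction
  have hBb : B b < b ^ n := by
    have h1 : (1 - C / n) * a ^ n < (1 - C / n) * b ^ n := by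
      have h2 : a ^ n < b ^ n := by
        calc a ^ n ≤ t * b ^ n := han
        _ < 1 * b ^ n := by
            apply mul_lt_mul_of_pos_right ht1 (by positivity)
        _ = b ^ n := one_mul _
      exact mul_lt_mul_of_pos_left h2 (by linarith)
    simp only [hB]
    nlinarith
  linarith

/-- Key quantitative step: under the hypotheses of the main theorem, for every natural
number `n > C` the inequality `|f x| < x ^ n` holds on all of `(0,1]`. -/
theorem stmt_6 (f f' : ℝ → ℝ) (C : ℝ) (hCpos : 0 < C)
    (hdiff : ∀ x ∈ Set.Icc (0 : ℝ) 1, HasDerivWithinAt f (f' x) (Set.Icc (0 : ℝ) 1) x)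
    (h0 : f 0 = 0)
    (hC : ∀ x ∈ Set.Icc (0 : ℝ) 1, |x * f' x| ≤ C * |f x|)
    (hflat : ∀ n : ℕ, 1 < n → ∃ δ > 0, ∀ x ∈ Set.Ioo 0 δ ∩ Set.Icc (0 : ℝ) 1, |f x| < x ^ n) :
    ∀ n : ℕ, C < n → ∀ x ∈ Set.Ioc (0 : ℝ) 1, |f x| < x ^ n := by
  intro n hCn x hx
  have hm2 : 2 ≤ max n 2 := le_max_right _ _
  have hCm : C < (max n 2 : ℕ) := lt_of_lt_of_le hCn (by exact_mod_cast le_max_left n 2)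
  have h1 : |f x| < x ^ (max n 2) :=
    key_step f f' C hCpos hdiff h0 hC hflat (max n 2) hm2 hCm x hx
  calc |f x| < x ^ (max n 2) := h1
  _ ≤ x ^ n := pow_le_pow_of_le_one hx.1.le hx.2 (le_max_left _ _)
end

section
/- Let f : [0,1] → ℝ be a C¹ function with f^(n)(0) = 0 for all n ≥ 0 (in the sense that f is smooth and flat at 0), satisfying |x·f'(x)| ≤ C·|f(x)| for all x ∈ [0,1] for some C > 0. Then f ≡ 0 on [0,1]. -/
open Set Topology Filter

/-- **Stoica's theorem.** A smooth function on `[0,1]`, flat at `0` (all one-sided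
derivatives vanish at `0`), satisfying `|x * f' x| ≤ C * |f x|` on `[0,1]` for some
`C > 0`, vanishes identically on `[0,1]`. -/
theorem stmt_9 (f : ℝ → ℝ) (C : ℝ) (hCpos : 0 < C)
    (hsmooth : ContDiffOn ℝ (⊤ : ℕ∞) f (Set.Icc (0 : ℝ) 1))
    (hflat : ∀ n : ℕ, iteratedDerivWithin n f (Set.Icc (0 : ℝ) 1) 0 = 0)
    (hC : ∀ x ∈ Set.Icc (0 : ℝ) 1,
      |x * derivWithin f (Set.Icc (0 : ℝ) 1) x| ≤ C * |f x|) :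
    ∀ x ∈ Set.Icc (0 : ℝ) 1, f x = 0 := by
  set S : Set ℝ := Set.Icc (0 : ℝ) 1 with hSdef
  have hUD : UniqueDiffOn ℝ S := uniqueDiffOn_Icc one_pos
  set n : ℕ := ⌈C⌉₊ + 1 with hndef
  have hnC : C < (n : ℝ) := lt_of_le_of_lt (Nat.le_ceil C) (by exact_mod_cast Nat.lt_succ_self _)
  -- bound on n-th derivative
  obtain ⟨M, hM⟩ : ∃ M, ∀ x ∈ S, |iteratedDerivWithin n f S x| ≤ M :=
    isCompact_Icc.exists_bound_of_continuousOn
      (hsmooth.continuousOn_iteratedDerivWithin (by exact_mod_cast le_top) hUD)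
  have hM0 : 0 ≤ M := le_trans (abs_nonneg _) (hM 0 ⟨le_rfl, zero_le_one⟩)
  -- Taylor-type bound by induction
  have taylor : ∀ j, j ≤ n → ∀ x ∈ S, |iteratedDerivWithin (n - j) f S x| ≤ M * x ^ j := by
    intro j
    induction j with
    | zero => intro _ x hx; simpa using hM x hx
    | succ j ih =>
      intro hj x hx
      have hj' : j ≤ n := by omega
      set m := n - (j + 1) with hmdef
      have hmj : m + 1 = n - j := by omega
      have hdiff : DifferentiableOn ℝ (iteratedDerivWithin m f S) S :=
        hsmooth.differentiableOn_iteratedDerivWithin (by exact_mod_cast lt_top_iff_ne_top.2 (by simp)) hUD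
      have key := image_norm_le_of_norm_deriv_right_le_deriv_boundary
        (f := iteratedDerivWithin m f S) (a := 0) (b := 1)
        (f' := fun t => derivWithin (iteratedDerivWithin m f S) S t)
        (hsmooth.continuousOn_iteratedDerivWithin (by exact_mod_cast le_top) hUD)
        (fun t ht => by
          have h1 : HasDerivWithinAt (iteratedDerivWithin m f S)
              (derivWithin (iteratedDerivWithin m f S) S t) S t :=
            (hdiff t ⟨ht.1, le_of_lt ht.2⟩).hasDerivWithinAt
          exact h1.mono_of_mem_nhdsWithin
            (Filter.mem_of_superset (Icc_mem_nhdsGE_of_mem ⟨le_rfl, ht.2⟩)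
              (Icc_subset_Icc_left ht.1)))
        (B := fun t => M * t ^ (j + 1) / (j + 1)) (B' := fun t => M * t ^ j)
        (by simp [hflat m])
        (fun t => by
          have h := ((hasDerivAt_pow (j + 1) t).const_mul M).div_const ((j : ℝ) + 1)
          refine h.congr_deriv ?_
          push_cast
          field_simp)
        (fun t ht => by
          have h2 : derivWithin (iteratedDerivWithin m f S) S t
              = iteratedDerivWithin (m + 1) f S t :=
            (congrFun iteratedDerivWithin_succ t).symm
          show ‖derivWithin (iteratedDerivWithin m f S) S t‖ ≤ M * t ^ j
          rw [Real.norm_eq_abs, h2, hmj]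
          exact ih hj' t ⟨ht.1, le_of_lt ht.2⟩)
      have hkx := key hx
      rw [Real.norm_eq_abs] at hkx
      refine hkx.trans ?_
      rw [div_le_iff₀ (by positivity)]
      have hx1 : (1 : ℝ) ≤ (j : ℝ) + 1 := by exact_mod_cast Nat.one_le_iff_ne_zero.2 (Nat.succ_ne_zero j)
      nlinarith [pow_nonneg hx.1 (j + 1), mul_nonneg hM0 (pow_nonneg hx.1 (j + 1))]
  have hfbound : ∀ x ∈ S, |f x| ≤ M * x ^ n := by
    intro x hx
    have := taylor n le_rfl x hx
    simpa using this
  -- the antitone function F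
  set r : ℝ := -(2 * C) with hrdef
  set F : ℝ → ℝ := fun t => f t ^ 2 * t ^ r with hFdef
  have hfa : ∀ t ∈ Ioo (0:ℝ) 1, DifferentiableAt ℝ f t ∧ deriv f t = derivWithin f S t := by
    intro t ht
    have hmem : S ∈ 𝓝 t := Icc_mem_nhds ht.1 ht.2
    have h1 : DifferentiableAt ℝ f t :=
      ((hsmooth.differentiableOn (by simp)) t ⟨le_of_lt ht.1, le_of_lt ht.2⟩).differentiableAt hmem
    exact ⟨h1, (derivWithin_of_mem_nhds hmem).symm⟩
  have hFderiv : ∀ t ∈ Ioo (0:ℝ) 1, HasDerivAt F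
      (2 * f t * deriv f t * t ^ r + f t ^ 2 * (r * t ^ (r - 1))) t := by
    intro t ht
    have h1 : HasDerivAt (fun t => f t ^ 2) (2 * f t * deriv f t) t := by
      have := ((hfa t ht).1.hasDerivAt).pow 2
      exact this.congr_deriv (by norm_num)
    have h2 : HasDerivAt (fun t : ℝ => t ^ r) (r * t ^ (r - 1)) t :=
      Real.hasDerivAt_rpow_const (Or.inl (ne_of_gt ht.1))
    exact h1.mul h2
  have hFanti : AntitoneOn F (Ioc (0:ℝ) 1) := by
    apply antitoneOn_of_deriv_nonpos (convex_Ioc 0 1)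
    · intro t ht
      have hfc : ContinuousWithinAt f (Ioc (0:ℝ) 1) t :=
        (hsmooth.continuousOn t (Ioc_subset_Icc_self ht)).mono Ioc_subset_Icc_self
      exact (hfc.pow 2).mul
        ((Real.continuousAt_rpow_const t r (Or.inl (ne_of_gt ht.1))).continuousWithinAt)
    · rw [interior_Ioc]
      intro t ht
      exact (hFderiv t ht).differentiableAt.differentiableWithinAt
    · rw [interior_Ioc]
      intro t ht
      rw [(hFderiv t ht).deriv]
      have htS : t ∈ S := ⟨le_of_lt ht.1, le_of_lt ht.2⟩
      have hCd : |t * deriv f t| ≤ C * |f t| := by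
        rw [(hfa t ht).2]; exact hC t htS
      have hpow : t ^ r = t ^ (r - 1) * t := by
        have h := Real.rpow_add_one (ne_of_gt ht.1) (r - 1)
        rw [sub_add_cancel] at h
        exact h
      have hr1 : (0:ℝ) ≤ t ^ (r - 1) := Real.rpow_nonneg (le_of_lt ht.1) _
      have hkey : 2 * f t * deriv f t * t ^ r + f t ^ 2 * (r * t ^ (r - 1))
          = t ^ (r - 1) * (2 * f t * (t * deriv f t) + r * f t ^ 2) := by
        rw [hpow]; ring
      rw [hkey]
      apply mul_nonpos_of_nonneg_of_nonpos hr1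
      have hA : f t * (t * deriv f t) ≤ C * f t ^ 2 := by
        calc f t * (t * deriv f t) ≤ |f t * (t * deriv f t)| := le_abs_self _
          _ = |f t| * |t * deriv f t| := abs_mul _ _
          _ ≤ |f t| * (C * |f t|) := mul_le_mul_of_nonneg_left hCd (abs_nonneg _)
          _ = C * f t ^ 2 := by rw [← sq_abs]; ring
      rw [hrdef]; nlinarith [hA]
  -- conclude
  intro a ha
  rcases eq_or_lt_of_le ha.1 with h0 | h0
  · have := hflat 0
    rw [iteratedDerivWithin_zero] at this
    rw [← h0]; exact this
  -- a > 0
  have hkey : ∀ x ∈ Ioc (0:ℝ) a, f a ^ 2 * a ^ r ≤ M ^ 2 * x ^ (2 * (n : ℝ) + r) := by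
    intro x hx
    have hx1 : x ∈ Ioc (0:ℝ) 1 := ⟨hx.1, le_trans hx.2 ha.2⟩
    have ha1 : a ∈ Ioc (0:ℝ) 1 := ⟨h0, ha.2⟩
    have h1 : F a ≤ F x := hFanti hx1 ha1 hx.2
    have h2 : f x ^ 2 ≤ M ^ 2 * x ^ (2 * n) := by
      have hb := hfbound x ⟨le_of_lt hx.1, hx1.2⟩
      have h := mul_self_le_mul_self (abs_nonneg (f x)) hb
      calc f x ^ 2 = |f x| * |f x| := by rw [abs_mul_abs_self]; ring
        _ ≤ (M * x ^ n) * (M * x ^ n) := h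
        _ = M ^ 2 * x ^ (2 * n) := by ring
    have h3 : F x ≤ M ^ 2 * x ^ (2 * n) * x ^ r := by
      have hr0 : (0:ℝ) < x ^ r := Real.rpow_pos_of_pos hx.1 r
      exact mul_le_mul_of_nonneg_right h2 (le_of_lt hr0)
    have h4 : (x : ℝ) ^ (2 * n) * x ^ r = x ^ (2 * (n : ℝ) + r) := by
      rw [← Real.rpow_natCast x (2 * n), ← Real.rpow_add hx.1]
      push_cast; ring_nf
    calc f a ^ 2 * a ^ r = F a := rfl
      _ ≤ F x := h1
      _ ≤ M ^ 2 * x ^ (2 * n) * x ^ r := h3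
      _ = M ^ 2 * x ^ (2 * (n : ℝ) + r) := by rw [mul_assoc, h4]
  have hp : (0:ℝ) < 2 * (n : ℝ) + r := by rw [hrdef]; linarith
  have htend : Filter.Tendsto (fun x : ℝ => M ^ 2 * x ^ (2 * (n : ℝ) + r))
      (nhdsWithin 0 (Ioi 0)) (nhds 0) := by
    have h1 : Filter.Tendsto (fun x : ℝ => x ^ (2 * (n : ℝ) + r)) (nhds 0) (nhds 0) := by
      have := (Real.continuousAt_rpow_const 0 (2 * (n : ℝ) + r) (Or.inr (le_of_lt hp)))
      simpa [Real.zero_rpow (ne_of_gt hp)] using this.tendsto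
    have h2 := (h1.const_mul (M ^ 2)).mono_left (nhdsWithin_le_nhds (s := Ioi (0:ℝ)))
    simpa using h2
  have hle : f a ^ 2 * a ^ r ≤ 0 := by
    refine ge_of_tendsto htend ?_
    filter_upwards [Ioc_mem_nhdsGT_of_mem ⟨le_rfl, h0⟩] with x hx
    exact hkey x hx
  have har : (0:ℝ) < a ^ r := Real.rpow_pos_of_pos h0 r
  have : f a ^ 2 ≤ 0 := by
    by_contra h
    push_neg at h
    nlinarith
  have := le_antisymm this (sq_nonneg (f a))
  exact pow_eq_zero_iff (n := 2) (by norm_num) |>.1 this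
end

section
/- Let f : [0,1] → ℝ be differentiable with f(0) = 0 and |x·f'(x)| ≤ C·|f(x)| on [0,1]. Suppose n > C is a natural number and |f(x)| < x^n for all x ∈ (0, x̄) where x̄ ∈ (0,1]. Then the upper Darboux integral of |f'| over [0, x̄] is strictly less than x̄^n. -/
open Set

/-! From `|x f'(x)| ≤ C |f(x)| ≤ C x^n` (at `x̄` by continuity) we get `|f'(x)| ≤ C x^(n-1)` on
`(0, x̄]`. On the uniform partition of `[0, x̄]` into `N` cells, the upper sum of `|f'|` is then
at most `|f'(0)| x̄/N` (only the first cell meets `0`, where `f'` is uncontrolled) plus a right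
Riemann sum of the increasing function `C x^(n-1)`, which is at most `(C/n) (x̄ + x̄/N)^n`.
Letting `N → ∞` bounds the upper integral by `(C/n) x̄^n < x̄^n`. -/

open Filter Topology

lemma upperIntegral_le_upperSum {h : ℝ → ℝ} (hh : ∀ x, 0 ≤ h x) {a b : ℝ} {N : ℕ} {p : ℕ → ℝ}
    (hp : IsPartition a b N p) : upperIntegral h a b ≤ upperSum h N p := by
  refine csInf_le ⟨0, ?_⟩ ⟨N, p, hp, rfl⟩
  rintro _ ⟨M, q, hq, rfl⟩
  refine Finset.sum_nonneg fun i hi => mul_nonneg ?_ ?_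
  · exact Real.sSup_nonneg (by rintro _ ⟨x, -, rfl⟩; exact hh x)
  · exact sub_nonneg.2 (hq.2.2 i (Finset.mem_range.1 hi))

lemma isPartition_uniform {b : ℝ} (hb : 0 ≤ b) (N : ℕ) :
    IsPartition 0 b (N + 1) (fun i => i * (b / (N + 1))) := by
  refine ⟨by simp, by push_cast; field_simp, fun i _ => ?_⟩
  push_cast
  gcongr
  linarith

lemma sum_range_add_one_pow_le (m N : ℕ) :
    ∑ i ∈ Finset.range N, ((i : ℝ) + 1) ^ m ≤ ((N : ℝ) + 1) ^ (m + 1) / (m + 1) := by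
  have hmono : MonotoneOn (fun x : ℝ => x ^ m) (Icc 1 (1 + N)) :=
    fun x hx y _ hxy => pow_le_pow_left₀ (by linarith [hx.1]) hxy m
  calc ∑ i ∈ Finset.range N, ((i : ℝ) + 1) ^ m = ∑ i ∈ Finset.range N, (1 + (i : ℝ)) ^ m := by
        simp only [add_comm]
    _ ≤ ∫ x in (1 : ℝ)..1 + N, x ^ m := hmono.sum_le_integral
    _ ≤ ((N : ℝ) + 1) ^ (m + 1) / (m + 1) := by
        rw [integral_pow, add_comm (1 : ℝ)]
        gcongr
        simp

lemma sum_range_mul_add_one_mul_pow_le {C δ : ℝ} (hC : 0 ≤ C) (hδ : 0 ≤ δ) (m N : ℕ) :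
    ∑ i ∈ Finset.range N, C * ((i + 1) * δ) ^ m * δ ≤ C / (m + 1) * ((N + 1) * δ) ^ (m + 1) := by
  calc ∑ i ∈ Finset.range N, C * ((i + 1) * δ) ^ m * δ
        = C * δ ^ (m + 1) * ∑ i ∈ Finset.range N, ((i : ℝ) + 1) ^ m := by
        rw [Finset.mul_sum]
        exact Finset.sum_congr rfl fun i _ => by rw [mul_pow, pow_succ]; ring
    _ ≤ C * δ ^ (m + 1) * (((N : ℝ) + 1) ^ (m + 1) / (m + 1)) := by
        gcongr
        exact sum_range_add_one_pow_le m N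
    _ = C / (m + 1) * ((N + 1) * δ) ^ (m + 1) := by rw [mul_pow]; ring

lemma abs_le_mul_pow_of_abs_mul_le {x d y C : ℝ} {m : ℕ} (hx : 0 < x) (hC : 0 ≤ C)
    (h : |x * d| ≤ C * |y|) (hy : |y| ≤ x ^ (m + 1)) : |d| ≤ C * x ^ m := by
  rw [abs_mul, abs_of_pos hx] at h
  refine le_of_mul_le_mul_left ?_ hx
  calc x * |d| ≤ C * |y| := h
    _ ≤ C * x ^ (m + 1) := by gcongr
    _ = x * (C * x ^ m) := by ring

section UpperSumBounds

variable {h g : ℝ → ℝ} {b u v : ℝ}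

lemma sSup_image_Icc_le_of_pos (hg : MonotoneOn g (Icc 0 b))
    (hhg : ∀ x ∈ Ioc 0 b, h x ≤ g x) (hu : 0 < u) (huv : u ≤ v) (hvb : v ≤ b) :
    sSup (h '' Icc u v) ≤ g v := by
  refine csSup_le ((nonempty_Icc.2 huv).image h) ?_
  rintro _ ⟨x, hx, rfl⟩
  have hx0 : 0 < x := hu.trans_le hx.1
  exact (hhg x ⟨hx0, hx.2.trans hvb⟩).trans
    (hg ⟨hx0.le, hx.2.trans hvb⟩ ⟨hx0.le.trans hx.2, hvb⟩ hx.2)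

lemma sSup_image_Icc_zero_le (hh0 : 0 ≤ h 0) (hg : MonotoneOn g (Icc 0 b)) (hg0 : 0 ≤ g 0)
    (hhg : ∀ x ∈ Ioc 0 b, h x ≤ g x) (hv : 0 ≤ v) (hvb : v ≤ b) :
    sSup (h '' Icc 0 v) ≤ h 0 + g v := by
  have hgv : g 0 ≤ g v := hg ⟨le_rfl, hv.trans hvb⟩ ⟨hv, hvb⟩ hv
  refine csSup_le ((nonempty_Icc.2 hv).image h) ?_
  rintro _ ⟨x, hx, rfl⟩
  rcases hx.1.eq_or_lt with rfl | hx0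
  · linarith
  · linarith [hhg x ⟨hx0, hx.2.trans hvb⟩, hg ⟨hx0.le, hx.2.trans hvb⟩ ⟨hv, hvb⟩ hx.2]

lemma upperSum_uniform_le (hh0 : 0 ≤ h 0) (hg : MonotoneOn g (Icc 0 b)) (hg0 : 0 ≤ g 0)
    (hhg : ∀ x ∈ Ioc 0 b, h x ≤ g x) (hb : 0 < b) (N : ℕ) :
    upperSum h (N + 1) (fun i => i * (b / (N + 1))) ≤
      h 0 * (b / (N + 1)) +
        ∑ i ∈ Finset.range (N + 1), g ((i + 1) * (b / (N + 1))) * (b / (N + 1)) := by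
  set δ := b / (N + 1) with hδ
  have hδ0 : 0 < δ := by positivity
  have hle : ∀ i ≤ N, ((i : ℝ) + 1) * δ ≤ b := fun i hi => by
    rw [hδ, ← mul_div_assoc, div_le_iff₀ (by positivity), mul_comm]
    gcongr
  have hwidth : ∀ i : ℝ, (i + 1) * δ - i * δ = δ := fun i => by ring
  simp only [upperSum, Nat.cast_add, Nat.cast_one, hwidth]
  rw [Finset.sum_range_succ', Finset.sum_range_succ', add_comm (h 0 * δ), add_assoc]
  refine add_le_add (Finset.sum_le_sum fun i hi => ?_) ?_
  · have hi : i + 1 ≤ N := Finset.mem_range.1 hi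
    refine mul_le_mul_of_nonneg_right (sSup_image_Icc_le_of_pos hg hhg (by positivity) ?_ ?_) hδ0.le
    · gcongr; linarith
    · exact_mod_cast hle (i + 1) hi
  · simp only [Nat.cast_zero, zero_mul, zero_add, one_mul]
    rw [← add_mul, add_comm (g δ)]
    exact mul_le_mul_of_nonneg_right
      (sSup_image_Icc_zero_le hh0 hg hg0 hhg hδ0.le (by simpa using hle 0 (Nat.zero_le N))) hδ0.le

end UpperSumBounds

lemma upperIntegral_le_of_le_mul_pow {h : ℝ → ℝ} {b C : ℝ} {m : ℕ} (hh : ∀ x, 0 ≤ h x)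
    (hC : 0 ≤ C) (hb : 0 < b) (hhb : ∀ x ∈ Ioc 0 b, h x ≤ C * x ^ m) :
    upperIntegral h 0 b ≤ C / (m + 1) * b ^ (m + 1) := by
  have hg : MonotoneOn (fun x => C * x ^ m) (Icc 0 b) :=
    fun x hx y _ hxy => by dsimp only; gcongr; exact hx.1
  have hδ : Tendsto (fun N : ℕ => b / (N + 1)) atTop (𝓝 0) := by
    simpa only [mul_one_div, mul_zero] using tendsto_one_div_add_atTop_nhds_zero_nat.const_mul b
  have hlim : Tendsto (fun N : ℕ => h 0 * (b / (N + 1)) + C / (m + 1) * (b + b / (N + 1)) ^ (m + 1))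
      atTop (𝓝 (C / (m + 1) * b ^ (m + 1))) := by
    simpa using (hδ.const_mul (h 0)).add (((tendsto_const_nhds.add hδ).pow (m + 1)).const_mul
      (C / (m + 1)))
  refine ge_of_tendsto' hlim fun N => ?_
  have hcover : ((N : ℝ) + 1 + 1) * (b / (N + 1)) = b + b / (N + 1) := by field_simp
  calc upperIntegral h 0 b ≤ upperSum h (N + 1) (fun i => i * (b / (N + 1))) :=
        upperIntegral_le_upperSum hh (isPartition_uniform hb.le N)
    _ ≤ h 0 * (b / (N + 1)) +
          ∑ i ∈ Finset.range (N + 1), C * ((i + 1) * (b / (N + 1))) ^ m * (b / (N + 1)) :=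
        upperSum_uniform_le (hh 0) hg (by positivity) hhb hb N
    _ ≤ h 0 * (b / (N + 1)) + C / (m + 1) * (b + b / (N + 1)) ^ (m + 1) := by
        grw [sum_range_mul_add_one_mul_pow_le hC (by positivity) m (N + 1)]
        push_cast
        rw [hcover]

theorem stmt_12_general (f f' : ℝ → ℝ) (C : ℝ) (hCpos : 0 < C)
    (hdiff : ∀ x ∈ Set.Icc (0 : ℝ) 1, HasDerivWithinAt f (f' x) (Set.Icc (0 : ℝ) 1) x)
    (hC : ∀ x ∈ Set.Icc (0 : ℝ) 1, |x * f' x| ≤ C * |f x|)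
    (n : ℕ) (hn : C < n) (xb : ℝ) (hxb : xb ∈ Set.Ioc (0 : ℝ) 1)
    (hlt : ∀ x ∈ Set.Ioo (0 : ℝ) xb, |f x| < x ^ n) :
    upperIntegral (fun x => |f' x|) 0 xb < xb ^ n := by
  obtain ⟨hxb0, hxb1⟩ := hxb
  obtain ⟨m, rfl⟩ : ∃ m, n = m + 1 :=
    Nat.exists_eq_succ_of_ne_zero (by exact_mod_cast (hCpos.trans hn).ne')
  have hfxb : |f xb| ≤ xb ^ (m + 1) := by
    have hcont : ContinuousWithinAt f (Ioo 0 xb) xb :=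
      (hdiff xb ⟨hxb0.le, hxb1⟩).continuousWithinAt.mono fun y hy => ⟨hy.1.le, hy.2.le.trans hxb1⟩
    exact hcont.abs.closure_le (g := (· ^ (m + 1))) (by simp [closure_Ioo hxb0.ne, hxb0.le])
      (continuous_pow _).continuousWithinAt fun y hy => (hlt y hy).le
  have hbound : ∀ x ∈ Ioc 0 xb, |f' x| ≤ C * x ^ m := fun x ⟨hx0, hxxb⟩ =>
    abs_le_mul_pow_of_abs_mul_le hx0 hCpos.le (hC x ⟨hx0.le, hxxb.trans hxb1⟩)
      (hxxb.eq_or_lt.elim (fun h => h ▸ hfxb) fun h => (hlt x ⟨hx0, h⟩).le)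
  calc upperIntegral (fun x => |f' x|) 0 xb ≤ C / (m + 1) * xb ^ (m + 1) :=
        upperIntegral_le_of_le_mul_pow (fun _ => abs_nonneg _) hCpos.le hxb0 hbound
    _ < xb ^ (m + 1) := by
        have hCm : C / (m + 1) < 1 := (div_lt_one (by positivity)).2 (by exact_mod_cast hn)
        nlinarith [pow_pos hxb0 (m + 1)]

/-- Quantitative estimate: if `|f x| < x ^ n` on `(0, xb)` with `n > C`, then the upper
Darboux integral of `|f'|` over `[0, xb]` is strictly below `xb ^ n`. -/
theorem stmt_12 (f f' : ℝ → ℝ) (C : ℝ) (hCpos : 0 < C)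
    (hdiff : ∀ x ∈ Set.Icc (0 : ℝ) 1, HasDerivWithinAt f (f' x) (Set.Icc (0 : ℝ) 1) x)
    (h0 : f 0 = 0)
    (hC : ∀ x ∈ Set.Icc (0 : ℝ) 1, |x * f' x| ≤ C * |f x|)
    (n : ℕ) (hn : C < n) (xb : ℝ) (hxb : xb ∈ Set.Ioc (0 : ℝ) 1)
    (hlt : ∀ x ∈ Set.Ioo (0 : ℝ) xb, |f x| < x ^ n) :
    upperIntegral (fun x => |f' x|) 0 xb < xb ^ n :=
  stmt_12_general f f' C hCpos hdiff hC n hn xb hxb hlt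
end
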